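/- arXiv:2010.13180 — 7 statements merged into one kernel-verified Lean document; each statement's English description precedes it below -/
import Mathlib

section
/- For every integer N ≥ 1 and every interval R = [a, b] with 0 ≤ a ≤ b ≤ N−1, the intervals in the canonical set Z(R) are pairwise disjoint. -/
/-- The nodes of the segment tree over `[0, N-1]`, represented as pairs `(l, r)`
of endpoints: `(0, N-1)` is the root, and every node `(l, r)` with `l < r` has
children `(l, m)` and `(m+1, r)` where `m = ⌊(l+r)/2⌋`. -/
inductive SegNode (N : ℕ) : ℕ × ℕ → Prop
  | root : SegNode N (0, N - 1)
  | left {l r : ℕ} : SegNode N (l, r) → l < r → SegNode N (l, (l + r) / 2)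
  | right {l r : ℕ} : SegNode N (l, r) → l < r → SegNode N ((l + r) / 2 + 1, r)

/-- `p` is the parent of the segment-tree node `n`. -/
def SegParent (N : ℕ) (p n : ℕ × ℕ) : Prop :=
  SegNode N p ∧ p.1 < p.2 ∧
    (n = (p.1, (p.1 + p.2) / 2) ∨ n = ((p.1 + p.2) / 2 + 1, p.2))

/-- The canonical set `Z(R)` for the interval `R = [a, b]`: segment-tree nodes
contained in `R` which are either the root or whose parent is not contained
in `R`. -/
def canonicalZ (N a b : ℕ) : Set (ℕ × ℕ) :=
  {n | SegNode N n ∧ Set.Icc n.1 n.2 ⊆ Set.Icc a b ∧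
    (n = (0, N - 1) ∨ ∀ p, SegParent N p n → ¬ Set.Icc p.1 p.2 ⊆ Set.Icc a b)}

/-- Descendant relation in the segment tree, starting from an arbitrary node. -/
inductive SegDesc : ℕ × ℕ → ℕ × ℕ → Prop
  | refl (p : ℕ × ℕ) : SegDesc p p
  | left {p : ℕ × ℕ} {l r : ℕ} : SegDesc p (l, r) → l < r → SegDesc p (l, (l + r) / 2)
  | right {p : ℕ × ℕ} {l r : ℕ} : SegDesc p (l, r) → l < r → SegDesc p ((l + r) / 2 + 1, r)

lemma segNode_of_desc {N : ℕ} {p q : ℕ × ℕ} (hp : SegNode N p) (h : SegDesc p q) :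
    SegNode N q := by
  induction h with
  | refl => exact hp
  | left h hl ih => exact ih.left hl
  | right h hl ih => exact ih.right hl

lemma segNode_desc_root {N : ℕ} {n : ℕ × ℕ} (h : SegNode N n) : SegDesc (0, N - 1) n := by
  induction h with
  | root => exact SegDesc.refl _
  | left h hl ih => exact SegDesc.left ih hl
  | right h hl ih => exact SegDesc.right ih hl

lemma segNode_le {N : ℕ} {n : ℕ × ℕ} (h : SegNode N n) : n.1 ≤ n.2 := by
  induction h with
  | root => simp
  | left h hl ih => simp at *; omega
  | right h hl ih => simp at *; omega

lemma desc_subset {p q : ℕ × ℕ} (h : SegDesc p q) :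
    Set.Icc q.1 q.2 ⊆ Set.Icc p.1 p.2 := by
  induction h with
  | refl => exact subset_rfl
  | left h hl ih => exact (Set.Icc_subset_Icc le_rfl (by simp; omega)).trans ih
  | right h hl ih => exact (Set.Icc_subset_Icc (by simp; omega) le_rfl).trans ih

lemma icc_disj {a b c d : ℕ} (h : b < c) : Disjoint (Set.Icc a b) (Set.Icc c d) := by
  rw [Set.disjoint_left]
  intro x hx hx'
  simp [Set.mem_Icc] at hx hx'
  omega

lemma desc_firstStep {p q : ℕ × ℕ} (h : SegDesc p q) :
    p = q ∨ (p.1 < p.2 ∧ (SegDesc (p.1, (p.1 + p.2) / 2) q ∨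
      SegDesc ((p.1 + p.2) / 2 + 1, p.2) q)) := by
  induction h with
  | refl => exact Or.inl rfl
  | @left l r h hl ih =>
    rcases ih with rfl | ⟨hp, h1 | h2⟩
    · exact Or.inr ⟨hl, Or.inl (SegDesc.refl _)⟩
    · exact Or.inr ⟨hp, Or.inl (SegDesc.left h1 hl)⟩
    · exact Or.inr ⟨hp, Or.inr (SegDesc.left h2 hl)⟩
  | @right l r h hl ih =>
    rcases ih with rfl | ⟨hp, h1 | h2⟩
    · exact Or.inr ⟨hl, Or.inr (SegDesc.refl _)⟩
    · exact Or.inr ⟨hp, Or.inl (SegDesc.right h1 hl)⟩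
    · exact Or.inr ⟨hp, Or.inr (SegDesc.right h2 hl)⟩

lemma desc_parent {p q : ℕ × ℕ} (h : SegDesc p q) (hne : p ≠ q) :
    ∃ s, SegDesc p s ∧ s.1 < s.2 ∧
      (q = (s.1, (s.1 + s.2) / 2) ∨ q = ((s.1 + s.2) / 2 + 1, s.2)) := by
  cases h with
  | refl => exact absurd rfl hne
  | @left l r h hl => exact ⟨(l, r), h, hl, Or.inl rfl⟩
  | @right l r h hl => exact ⟨(l, r), h, hl, Or.inr rfl⟩

lemma seg_trichotomy {t p q : ℕ × ℕ} (hp : SegDesc t p) (hq : SegDesc t q) :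
    SegDesc p q ∨ SegDesc q p ∨ Disjoint (Set.Icc p.1 p.2) (Set.Icc q.1 q.2) := by
  induction hp with
  | refl => exact Or.inl hq
  | @left l r h hl ih =>
    rcases ih with h1 | h2 | h3
    · rcases desc_firstStep h1 with rfl | ⟨_, hL | hR⟩
      · exact Or.inr (Or.inl (SegDesc.left (SegDesc.refl _) hl))
      · exact Or.inl hL
      · refine Or.inr (Or.inr ?_)
        exact (icc_disj (by simp)).mono_right (desc_subset hR)
    · exact Or.inr (Or.inl (SegDesc.left h2 hl))
    · refine Or.inr (Or.inr (h3.mono_left ?_))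
      exact Set.Icc_subset_Icc le_rfl (by simp; omega)
  | @right l r h hl ih =>
    rcases ih with h1 | h2 | h3
    · rcases desc_firstStep h1 with rfl | ⟨_, hL | hR⟩
      · exact Or.inr (Or.inl (SegDesc.right (SegDesc.refl _) hl))
      · refine Or.inr (Or.inr ?_)
        exact (icc_disj (show (l + r) / 2 < (l + r) / 2 + 1 by omega)).symm.mono_right
          (desc_subset hL)
      · exact Or.inl hR
    · exact Or.inr (Or.inl (SegDesc.right h2 hl))
    · refine Or.inr (Or.inr (h3.mono_left ?_))
      exact Set.Icc_subset_Icc (by simp; omega) le_rfl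

lemma canonical_not_desc (N : ℕ) (a b : ℕ) {m n : ℕ × ℕ}
    (hm : m ∈ canonicalZ N a b) (hn : n ∈ canonicalZ N a b) (hne : m ≠ n)
    (hd : SegDesc m n) : False := by
  obtain ⟨hm1, hm2, hm3⟩ := hm
  obtain ⟨hn1, hn2, hn3⟩ := hn
  rcases hn3 with rfl | hpar
  · -- n is the root, but Icc m ⊆ Icc n ⊆ Icc m, so m = n
    apply hne
    have h1 : Set.Icc (0 : ℕ) (N - 1) ⊆ Set.Icc m.1 m.2 := desc_subset hd
    have h2 : Set.Icc m.1 m.2 ⊆ Set.Icc (0 : ℕ) (N - 1) := by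
      simpa using desc_subset (segNode_desc_root hm1)
    have hmle : m.1 ≤ m.2 := segNode_le hm1
    have e1 := h1 (Set.mem_Icc.mpr ⟨le_refl 0, Nat.zero_le _⟩)
    have e2 := h1 (Set.mem_Icc.mpr ⟨Nat.zero_le _, le_refl (N - 1)⟩)
    have e3 := h2 (Set.mem_Icc.mpr ⟨le_refl m.1, hmle⟩)
    have e4 := h2 (Set.mem_Icc.mpr ⟨hmle, le_refl m.2⟩)
    simp [Set.mem_Icc] at e1 e2 e3 e4
    have : m.1 = 0 ∧ m.2 = N - 1 := by omega
    exact Prod.ext this.1 this.2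
  · obtain ⟨s, hds, hs12, hchild⟩ := desc_parent hd hne
    have hsp : SegParent N s n := ⟨segNode_of_desc hm1 hds, hs12, hchild⟩
    exact hpar s hsp ((desc_subset hds).trans hm2)

/-- The intervals in the canonical set `Z(R)` are pairwise disjoint. -/
theorem canonicalZ_pairwise_disjoint (N : ℕ) (hN : 1 ≤ N) (a b : ℕ)
    (hab : a ≤ b) (hbN : b ≤ N - 1) :
    ∀ m ∈ canonicalZ N a b, ∀ n ∈ canonicalZ N a b, m ≠ n →
      Disjoint (Set.Icc m.1 m.2) (Set.Icc n.1 n.2) := by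
  intro m hm n hn hne
  rcases seg_trichotomy (segNode_desc_root hm.1) (segNode_desc_root hn.1) with h | h | h
  · exact absurd (canonical_not_desc N a b hm hn hne h) (by simp)
  · exact absurd (canonical_not_desc N a b hn hm hne.symm h) (by simp)
  · exact h
end

section
/- For every integer N ≥ 1 and every interval R = [a, b] with 0 ≤ a ≤ b ≤ N−1, the union of the intervals in the canonical set Z(R) equals R. -/
lemma seg_leaf (N : ℕ) : ∀ d l r, r - l ≤ d → SegNode N (l, r) →
    ∀ x, l ≤ x → x ≤ r → SegNode N (x, x) := by
  intro d
  induction d with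
  | zero =>
    intro l r h hn x hlx hxr
    obtain ⟨rfl, rfl⟩ : l = x ∧ r = x := by omega
    exact hn
  | succ d ih =>
    intro l r h hn x hlx hxr
    by_cases hlr : l < r
    · by_cases hx : x ≤ (l + r) / 2
      · exact ih l ((l + r) / 2) (by omega) (SegNode.left hn hlr) x hlx hx
      · exact ih ((l + r) / 2 + 1) r (by omega) (SegNode.right hn hlr) x (by omega) hxr
    · obtain ⟨rfl, rfl⟩ : l = x ∧ r = x := by omega
      exact hn

lemma canonicalZ_cover (N a b : ℕ) (x : ℕ) :
    ∀ k n, SegNode N n → n.1 ≤ x → x ≤ n.2 →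
      Set.Icc n.1 n.2 ⊆ Set.Icc a b → (b - a) - (n.2 - n.1) ≤ k →
      ∃ m ∈ canonicalZ N a b, x ∈ Set.Icc m.1 m.2 := by
  intro k
  induction k with
  | zero =>
    intro n hn h1 h2 hsub hk
    refine ⟨n, ⟨hn, hsub, Or.inr ?_⟩, h1, h2⟩
    rintro ⟨p1, p2⟩ ⟨hp, hplt, hch⟩ hpsub
    have hbnd : a ≤ p1 ∧ p2 ≤ b := by
      exact ⟨(hpsub ⟨le_refl p1, le_of_lt hplt⟩).1, (hpsub ⟨le_of_lt hplt, le_refl p2⟩).2⟩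
    have hbnd' : a ≤ n.1 ∧ n.2 ≤ b :=
      ⟨(hsub ⟨le_refl n.1, h1.trans h2⟩).1, (hsub ⟨h1.trans h2, le_refl n.2⟩).2⟩
    rcases hch with h | h <;>
    · subst h
      simp only [Set.Icc_subset_Icc_iff, Set.mem_Icc] at *
      omega
  | succ k ih =>
    intro n hn h1 h2 hsub hk
    by_cases hp : ∃ p, SegParent N p n ∧ Set.Icc p.1 p.2 ⊆ Set.Icc a b
    · obtain ⟨⟨p1, p2⟩, ⟨hpn, hplt, hch⟩, hpsub⟩ := hp
      have hbnd : a ≤ p1 ∧ p2 ≤ b :=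
        ⟨(hpsub ⟨le_refl p1, le_of_lt hplt⟩).1, (hpsub ⟨le_of_lt hplt, le_refl p2⟩).2⟩
      have hsz : p1 ≤ n.1 ∧ n.2 ≤ p2 ∧ n.2 - n.1 < p2 - p1 := by
        rcases hch with h | h <;>
        · subst h
          simp only [] at *
          omega
      exact ih (p1, p2) hpn (hsz.1.trans h1) (h2.trans hsz.2.1) hpsub (by omega)
    · push_neg at hp
      exact ⟨n, ⟨hn, hsub, Or.inr hp⟩, h1, h2⟩

/-- The union of the intervals in the canonical set `Z(R)` equals `R`. -/
theorem canonicalZ_union (N : ℕ) (hN : 1 ≤ N) (a b : ℕ)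
    (hab : a ≤ b) (hbN : b ≤ N - 1) :
    ⋃ n ∈ canonicalZ N a b, Set.Icc n.1 n.2 = Set.Icc a b := by
  apply Set.Subset.antisymm
  · refine Set.iUnion₂_subset fun n hn => hn.2.1
  · intro x hx
    have hleaf : SegNode N (x, x) :=
      seg_leaf N (N - 1) 0 (N - 1) (by omega) SegNode.root x (Nat.zero_le x)
        (hx.2.trans hbN)
    have hsub : Set.Icc x x ⊆ Set.Icc a b := by
      intro y hy
      simp only [Set.mem_Icc] at *
      omega
    obtain ⟨m, hm, hxm⟩ := canonicalZ_cover N a b x ((b - a) - 0) (x, x) hleaf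
      le_rfl le_rfl hsub (by simp)
    exact Set.mem_biUnion hm hxm
end

section
/- Suppose F : α × α × ℕ → α satisfies (H1) F(a, x ▽ y, k) = F(F(a, x, k), y, k) for all a, x, y ∈ α and k ∈ ℕ, and (H2) F(a, v, p) △ F(b, v, q) = F(a △ b, v, p + q) for all a, b, v ∈ α and p, q ∈ ℕ. Then for all a, b, z_l, z_r, L ∈ α and p, q ∈ ℕ: F(F(a, z_l, p) △ F(b, z_r, q), L, p + q) = F(a, z_l ▽ L, p) △ F(b, z_r ▽ L, q). (This is the identity underlying the child-value rule n_V = F((n_l)_V, (n_l)_Z, |n_l|) △ F((n_r)_V, (n_r)_Z, |n_r|) of the lazy-propagation segment tree.) -/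
/-- The identity underlying the child-value rule of the lazy-propagation
segment tree: if `F` satisfies `F(a, x ▽ y, k) = F(F(a, x, k), y, k)` and
`F(a, v, p) △ F(b, v, q) = F(a △ b, v, p + q)`, then
`F(F(a, z_l, p) △ F(b, z_r, q), L, p + q) = F(a, z_l ▽ L, p) △ F(b, z_r ▽ L, q)`. -/
theorem child_value_rule {α : Type*} (d t : α → α → α) (F : α → α → ℕ → α)
    (H1 : ∀ (a x y : α) (k : ℕ), F a (d x y) k = F (F a x k) y k)
    (H2 : ∀ (a b v : α) (p q : ℕ), t (F a v p) (F b v q) = F (t a b) v (p + q)) :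
    ∀ (a b zl zr L : α) (p q : ℕ),
      F (t (F a zl p) (F b zr q)) L (p + q) = t (F a (d zl L) p) (F b (d zr L) q) := by
  intro a b zl zr L p q
  rw [H1, H1, H2]
end

section
/- Let ▽ and △ be binary operations on a set α such that △ has a two-sided identity element ∅_Q. Suppose there exists a function G : α × α × ℕ × ℕ → α such that for every finite sequence a₀, …, a_{k−1} of elements of α, every v ∈ α, and every subset J ⊆ {0, 1, …, k−1}: △_{0≤i<k}(aᵢ ▽ v if i ∈ J, else aᵢ) = G(△_{0≤i<k} aᵢ, v, |J|, k). Then for all a, b, v ∈ α: (a ▽ v) △ b = (a △ b) ▽ v. -/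
/-- If `△` has a two-sided identity `e` and there is a function `G` such that
for every finite sequence `a : Fin k → α`, every `v`, and every subset `J` of
indices, `△_{0≤i<k} (aᵢ ▽ v if i ∈ J else aᵢ) = G(△_{0≤i<k} aᵢ, v, |J|, k)`
(folds taken left-to-right, starting from the identity `e`), then
`(a ▽ v) △ b = (a △ b) ▽ v` for all `a, b, v`. -/
theorem special_property_of_G {α : Type*} (d t : α → α → α) (e : α)
    (he_right : ∀ a, t a e = a) (he_left : ∀ a, t e a = a)
    (G : α → α → ℕ → ℕ → α)
    (hG : ∀ (k : ℕ) (a : Fin k → α) (v : α) (J : Finset (Fin k)),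
      (List.ofFn (fun i => if i ∈ J then d (a i) v else a i)).foldl t e
        = G ((List.ofFn a).foldl t e) v J.card k) :
    ∀ a b v : α, t (d a v) b = d (t a b) v := by
  intro a b v
  have h1 := hG 2 ![a, b] v {0}
  have h2 := hG 2 ![t a b, e] v {0}
  simp [List.ofFn_succ, Fin.isValue, he_left, he_right,
    show ((0 : Fin 2) ∈ ({0} : Finset (Fin 2))) from Finset.mem_singleton_self 0,
    show ((1 : Fin 2) ∉ ({0} : Finset (Fin 2))) by decide] at h1 h2
  rw [h1, h2]
end

section
/- Let T₃, T₂b, T₂a, T₁, T₀ : ℕ → ℕ satisfy, for every k ≥ 2: T₃(k+1) = 3 + 2·T₃(k); T₂b(k+1) = 1 + max(2·T₂b(k), 4·T₃(k)); T₂a(k+1) = 2 + 2·T₃(k) + T₂a(k); T₁(k+1) = 1 + max(T₁(k) + T₂b(k), 2·T₃(k) + 2·T₂a(k)); T₀(k+1) = 1 + max(T₀(k), 2·T₁(k), 4·T₂a(k)); and suppose T₃(2), T₂b(2), T₂a(2), T₁(2), T₀(2) are all at most 21. Then for every k ≥ 2: T₃(k) ≤ 2^{k+3} − 3, T₂b(k)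 ≤ 2^{k+4} − 1, T₂a(k) ≤ 2^{k+4}, T₁(k) ≤ 2^{k+5} + 1, and T₀(k) ≤ 2^{k+5} + 3. -/
/-- Upper bounds on the quadtree-recurrence functions `T₃, T₂b, T₂a, T₁, T₀`:
given the stated recurrences for `k ≥ 2` and base values at `k = 2` bounded by
`21`, one has `T₃(k) ≤ 2^{k+3} − 3`, `T₂b(k) ≤ 2^{k+4} − 1`, `T₂a(k) ≤ 2^{k+4}`,
`T₁(k) ≤ 2^{k+5} + 1`, and `T₀(k) ≤ 2^{k+5} + 3` for all `k ≥ 2`. -/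
theorem quadtree_recurrence_bounds (T3 T2b T2a T1 T0 : ℕ → ℕ)
    (h3 : ∀ k, 2 ≤ k → T3 (k + 1) = 3 + 2 * T3 k)
    (h2b : ∀ k, 2 ≤ k → T2b (k + 1) = 1 + max (2 * T2b k) (4 * T3 k))
    (h2a : ∀ k, 2 ≤ k → T2a (k + 1) = 2 + 2 * T3 k + T2a k)
    (h1 : ∀ k, 2 ≤ k → T1 (k + 1) = 1 + max (T1 k + T2b k) (2 * T3 k + 2 * T2a k))
    (h0 : ∀ k, 2 ≤ k → T0 (k + 1) = 1 + max (T0 k) (max (2 * T1 k) (4 * T2a k)))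
    (b3 : T3 2 ≤ 21) (b2b : T2b 2 ≤ 21) (b2a : T2a 2 ≤ 21)
    (b1 : T1 2 ≤ 21) (b0 : T0 2 ≤ 21) :
    ∀ k, 2 ≤ k →
      T3 k ≤ 2 ^ (k + 3) - 3 ∧ T2b k ≤ 2 ^ (k + 4) - 1 ∧ T2a k ≤ 2 ^ (k + 4) ∧
      T1 k ≤ 2 ^ (k + 5) + 1 ∧ T0 k ≤ 2 ^ (k + 5) + 3 := by
  intro k hk
  induction k, hk using Nat.le_induction with
  | base => refine ⟨?_, ?_, ?_, ?_, ?_⟩ <;> norm_num <;> omega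
  | succ k hk ih =>
    obtain ⟨i3, i2b, i2a, i1, i0⟩ := ih
    rw [h3 k hk, h2b k hk, h2a k hk, h1 k hk, h0 k hk]
    have e3 : 2 ^ (k + 1 + 3) = 2 * 2 ^ (k + 3) := by ring
    have e4 : 2 ^ (k + 4) = 2 * 2 ^ (k + 3) := by ring
    have e5 : 2 ^ (k + 5) = 4 * 2 ^ (k + 3) := by ring
    have e4' : 2 ^ (k + 1 + 4) = 4 * 2 ^ (k + 3) := by ring
    have e5' : 2 ^ (k + 1 + 5) = 8 * 2 ^ (k + 3) := by ring
    have hp : 8 ≤ 2 ^ (k + 3) := by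
      calc (8:ℕ) = 2 ^ 3 := by norm_num
      _ ≤ 2 ^ (k + 3) := Nat.pow_le_pow_right (by norm_num) (by omega)
    refine ⟨?_, ?_, ?_, ?_, ?_⟩ <;> omega
end

section
/- Let N, M ≥ 1 and consider any tree of nodes over E = {0, …, N−1} × {0, …, M−1}. Then there exists a set L that is either a row {x} × {0, …, M−1} for some x or a column {0, …, N−1} × {y} for some y, such that every finite set S of tree nodes whose covers have union equal to L satisfies (N + M) · |S| ≥ N · M. (That is, some single row or column requires at least NM/(N+M) tree nodes to be represented, so updates and queries using any tree of nodes take Ω(NM/(N+M)) time in the worst case.) -/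
/-- A tree of nodes over a finite nonempty set `E`: a finite rooted tree
together with an assignment of a nonempty subset `cover n ⊆ E` to each tree
node `n` such that the root covers `E`; for every node with children, the
covers of its children are pairwise disjoint and their union equals the cover
of the node; every node covering more than one element has at least two
children; and every node covering exactly one element has no children. -/
structure NodeTree (E : Type*) where
  /-- The (finite) type of tree nodes. -/
  ι : Type
  instFintype : Fintype ι
  /-- The root node. -/
  root : ι
  /-- The set of children of each node. -/
  children : ι → Finset ι
  /-- The subset of `E` covered by each node. -/
  cover : ι → Set E
  cover_nonempty : ∀ n, (cover n).Nonempty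
  root_cover : cover root = Set.univ
  children_disjoint : ∀ n, ∀ c₁ ∈ children n, ∀ c₂ ∈ children n,
    c₁ ≠ c₂ → Disjoint (cover c₁) (cover c₂)
  children_union : ∀ n, (children n).Nonempty →
    ⋃ c ∈ children n, cover c = cover n
  two_children : ∀ n, 1 < (cover n).ncard → 2 ≤ (children n).card
  no_children : ∀ n, (cover n).ncard = 1 → children n = ∅
  root_not_child : ∀ n, root ∉ children n
  parent_unique : ∀ c p₁ p₂, c ∈ children p₁ → c ∈ children p₂ → p₁ = p₂
  reachable : ∀ n, Relation.ReflTransGen (fun p c => c ∈ children p) root n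


lemma NodeTree.cover_child_subset {E : Type*} (T : NodeTree E) {p c : T.ι}
    (hc : c ∈ T.children p) : T.cover c ⊆ T.cover p := by
  have := T.children_union p ⟨c, hc⟩
  exact this ▸ Set.subset_biUnion_of_mem hc

lemma NodeTree.cover_subset_of_reach {E : Type*} (T : NodeTree E) {a b : T.ι}
    (h : Relation.ReflTransGen (fun p c => c ∈ T.children p) a b) :
    T.cover b ⊆ T.cover a := by
  induction h with
  | refl => exact subset_rfl
  | tail _ hc ih => exact (T.cover_child_subset hc).trans ih

lemma NodeTree.comparable_aux {E : Type*} (T : NodeTree E) (a n₁ n₂ : T.ι)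
    (h1 : Relation.ReflTransGen (fun p c => c ∈ T.children p) a n₁) :
    Relation.ReflTransGen (fun p c => c ∈ T.children p) a n₂ →
    (T.cover n₁ ∩ T.cover n₂).Nonempty →
    T.cover n₁ ⊆ T.cover n₂ ∨ T.cover n₂ ⊆ T.cover n₁ := by
  induction h1 using Relation.ReflTransGen.head_induction_on with
  | refl => intro h2 _; exact Or.inr (T.cover_subset_of_reach h2)
  | head hstep hrest ih =>
    rename_i a c₁
    intro h2 hne
    rcases h2.cases_head with rfl | ⟨c₂, hc₂, h2'⟩
    · exact Or.inl (T.cover_subset_of_reach (Relation.ReflTransGen.head hstep hrest))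
    · obtain ⟨z, hz1, hz2⟩ := hne
      have hz1' : z ∈ T.cover c₁ := T.cover_subset_of_reach hrest hz1
      have hz2' : z ∈ T.cover c₂ := T.cover_subset_of_reach h2' hz2
      have hcc : c₁ = c₂ := by
        by_contra hne'
        exact (T.children_disjoint a c₁ hstep c₂ hc₂ hne').ne_of_mem hz1' hz2' rfl
      exact ih (hcc ▸ h2') ⟨z, hz1, hz2⟩

lemma NodeTree.comparable {E : Type*} (T : NodeTree E) (n₁ n₂ : T.ι)
    (h : (T.cover n₁ ∩ T.cover n₂).Nonempty) :
    T.cover n₁ ⊆ T.cover n₂ ∨ T.cover n₂ ⊆ T.cover n₁ :=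
  T.comparable_aux T.root n₁ n₂ (T.reachable n₁) (T.reachable n₂) h

/-- For any tree of nodes over the grid `{0,…,N−1} × {0,…,M−1}` (with
`N, M ≥ 1`), some row `{x} × {0,…,M−1}` or column `{0,…,N−1} × {y}` requires at
least `NM/(N+M)` tree nodes to be represented: every finite set `S` of tree
nodes whose covers have union equal to that line satisfies
`(N + M)·|S| ≥ N·M`. -/
theorem tree_of_nodes_lower_bound (N M : ℕ) (hN : 1 ≤ N) (hM : 1 ≤ M)
    (T : NodeTree (Fin N × Fin M)) :
    ∃ L : Set (Fin N × Fin M),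
      ((∃ x : Fin N, L = {p | p.1 = x}) ∨ (∃ y : Fin M, L = {p | p.2 = y})) ∧
      ∀ S : Finset T.ι, (⋃ n ∈ S, T.cover n) = L → N * M ≤ (N + M) * S.card := by
  classical
  letI := T.instFintype
  by_contra hcon
  push_neg at hcon
  have hrow : ∀ x : Fin N, ∃ S : Finset T.ι,
      (⋃ n ∈ S, T.cover n) = {p : Fin N × Fin M | p.1 = x} ∧ (N + M) * S.card < N * M :=
    fun x => hcon _ (Or.inl ⟨x, rfl⟩)
  have hcol : ∀ y : Fin M, ∃ S : Finset T.ι,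
      (⋃ n ∈ S, T.cover n) = {p : Fin N × Fin M | p.2 = y} ∧ (N + M) * S.card < N * M :=
    fun y => hcon _ (Or.inr ⟨y, rfl⟩)
  choose R hR1 hR2 using hrow
  choose C hC1 hC2 using hcol
  -- for each cell, a node covering exactly that cell, lying in R x or C y
  have key : ∀ p : Fin N × Fin M,
      ∃ n : T.ι, (n ∈ R p.1 ∨ n ∈ C p.2) ∧ T.cover n = {p} := by
    rintro ⟨x, y⟩
    have hx : (⟨x, y⟩ : Fin N × Fin M) ∈ ⋃ n ∈ R x, T.cover n := by
      rw [hR1]; exact rfl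
    have hy : (⟨x, y⟩ : Fin N × Fin M) ∈ ⋃ n ∈ C y, T.cover n := by
      rw [hC1]; exact rfl
    simp only [Set.mem_iUnion, exists_prop] at hx hy
    obtain ⟨n₁, hn₁, hpn₁⟩ := hx
    obtain ⟨n₂, hn₂, hpn₂⟩ := hy
    have hsub₁ : T.cover n₁ ⊆ {p : Fin N × Fin M | p.1 = x} :=
      (hR1 x) ▸ Set.subset_biUnion_of_mem hn₁
    have hsub₂ : T.cover n₂ ⊆ {p : Fin N × Fin M | p.2 = y} :=
      (hC1 y) ▸ Set.subset_biUnion_of_mem hn₂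
    rcases T.comparable n₁ n₂ ⟨⟨x, y⟩, hpn₁, hpn₂⟩ with hle | hle
    · refine ⟨n₁, Or.inl hn₁, ?_⟩
      apply Set.eq_singleton_iff_nonempty_unique_mem.mpr
      refine ⟨T.cover_nonempty n₁, fun z hz => ?_⟩
      have h1 : z.1 = x := hsub₁ hz
      have h2 : z.2 = y := hsub₂ (hle hz)
      exact Prod.ext h1 h2
    · refine ⟨n₂, Or.inr hn₂, ?_⟩
      apply Set.eq_singleton_iff_nonempty_unique_mem.mpr
      refine ⟨T.cover_nonempty n₂, fun z hz => ?_⟩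
      have h1 : z.1 = x := hsub₁ (hle hz)
      have h2 : z.2 = y := hsub₂ hz
      exact Prod.ext h1 h2
  choose f hf1 hf2 using key
  set U : Finset T.ι :=
    (Finset.univ.biUnion R) ∪ (Finset.univ.biUnion C) with hU
  have hmem : ∀ p : Fin N × Fin M, f p ∈ U := by
    intro p
    rcases hf1 p with h | h
    · exact Finset.mem_union_left _ (Finset.mem_biUnion.mpr ⟨p.1, Finset.mem_univ _, h⟩)
    · exact Finset.mem_union_right _ (Finset.mem_biUnion.mpr ⟨p.2, Finset.mem_univ _, h⟩)
  have hinj : Set.InjOn f (Finset.univ : Finset (Fin N × Fin M)) := by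
    intro p _ q _ hpq
    have : ({p} : Set (Fin N × Fin M)) = {q} := by rw [← hf2 p, ← hf2 q, hpq]
    exact Set.singleton_eq_singleton_iff.mp this
  have hcard : N * M ≤ U.card := by
    have := Finset.card_le_card_of_injOn f (fun p _ => hmem p) hinj
    simpa using this
  have hUle : U.card ≤ (∑ x : Fin N, (R x).card) + (∑ y : Fin M, (C y).card) := by
    calc U.card ≤ (Finset.univ.biUnion R).card + (Finset.univ.biUnion C).card :=
          Finset.card_union_le _ _
      _ ≤ _ := Nat.add_le_add (Finset.card_biUnion_le) (Finset.card_biUnion_le)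
  have hRsum : (N + M) * (∑ x : Fin N, (R x).card) ≤ N * (N * M - 1) := by
    rw [Finset.mul_sum]
    calc ∑ x : Fin N, (N + M) * (R x).card ≤ ∑ _x : Fin N, (N * M - 1) :=
          Finset.sum_le_sum (fun x _ => Nat.le_sub_one_of_lt (hR2 x))
      _ = N * (N * M - 1) := by simp [mul_comm]
  have hCsum : (N + M) * (∑ y : Fin M, (C y).card) ≤ M * (N * M - 1) := by
    rw [Finset.mul_sum]
    calc ∑ y : Fin M, (N + M) * (C y).card ≤ ∑ _y : Fin M, (N * M - 1) :=
          Finset.sum_le_sum (fun y _ => Nat.le_sub_one_of_lt (hC2 y))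
      _ = M * (N * M - 1) := by simp [mul_comm]
  have hfinal : (N + M) * (N * M) ≤ (N + M) * (N * M - 1) := by
    calc (N + M) * (N * M) ≤ (N + M) * U.card := Nat.mul_le_mul_left _ hcard
      _ ≤ (N + M) * ((∑ x : Fin N, (R x).card) + (∑ y : Fin M, (C y).card)) :=
          Nat.mul_le_mul_left _ hUle
      _ = (N + M) * (∑ x : Fin N, (R x).card) + (N + M) * (∑ y : Fin M, (C y).card) := by ring
      _ ≤ N * (N * M - 1) + M * (N * M - 1) := Nat.add_le_add hRsum hCsum
      _ = (N + M) * (N * M - 1) := by ring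
  have hNM : 1 ≤ N * M := Nat.one_le_iff_ne_zero.mpr (by positivity)
  have := Nat.le_of_mul_le_mul_left hfinal (by omega)
  omega
end

section
/- Let N, M ≥ 1, let 𝒩 be a collection of nonempty subsets of E = {0, …, N−1} × {0, …, M−1}, and suppose that for every x ∈ {0, …, N−1} we are given a finite set S_x ⊆ 𝒩 of subsets of the row {x} × {0, …, M−1} whose union equals that row. For y ∈ {0, …, M−1}, let C_y = {m ∈ 𝒩 : m ∩ ({0, …, N−1} × {y}) ≠ ∅ and m ⊄ {0, …, N−1} × {y}}. Then Σ_{x} |S_x| + Σ_{y} |C_y| ≥ N · M; consequently, there exists x with (N + M)·|S_x| ≥ N·M or there exists y with (N + M)·|C_y| ≥ N·M. (This is the claim that for any set of arbitrary 2D nodes, the update operation must visit at least NM/(N+M) nodes in the worst case.) -/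
set_option linter.unusedVariables false in

theorem key_lemma (N M : ℕ) (hN : 1 ≤ N) (hM : 1 ≤ M)
    (𝒩 : Set (Set (Fin N × Fin M))) (h𝒩 : ∀ m ∈ 𝒩, m.Nonempty)
    (S : Fin N → Finset (Set (Fin N × Fin M)))
    (hS𝒩 : ∀ x, ∀ m ∈ S x, m ∈ 𝒩)
    (hSrow : ∀ x, ∀ m ∈ S x, m ⊆ {p | p.1 = x})
    (hSunion : ∀ x, ⋃ m ∈ S x, m = {p : Fin N × Fin M | p.1 = x}) :
    N * M ≤ (∑ x : Fin N, (S x).card) +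
        ∑ y : Fin M, {m | m ∈ 𝒩 ∧ (m ∩ {p | p.2 = y}).Nonempty ∧
          ¬ m ⊆ {p | p.2 = y}}.ncard := by
  classical
  set C : Fin M → Set (Set (Fin N × Fin M)) := fun y =>
    {m | m ∈ 𝒩 ∧ (m ∩ {p | p.2 = y}).Nonempty ∧ ¬ m ⊆ {p | p.2 = y}} with hC
  have hcov : ∀ p : Fin N × Fin M, ∃ m ∈ S p.1, p ∈ m := by
    intro p
    have : p ∈ ⋃ m ∈ S p.1, m := by rw [hSunion p.1]; simp
    simpa using this
  choose f hf1 hf2 using hcov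
  have hCfin : ∀ y, (C y).Finite := fun y => Set.toFinite _
  set T : Finset ((Σ _ : Fin N, Set (Fin N × Fin M)) ⊕ (Σ _ : Fin M, Set (Fin N × Fin M))) :=
    (Finset.univ.sigma fun x => S x).disjSum
      (Finset.univ.sigma fun y => (hCfin y).toFinset) with hT
  set g : Fin N × Fin M → (Σ _ : Fin N, Set (Fin N × Fin M)) ⊕ (Σ _ : Fin M, Set (Fin N × Fin M)) :=
    fun p => if f p = {p} then .inl ⟨p.1, f p⟩ else .inr ⟨p.2, f p⟩ with hg
  have hmaps : ∀ p : Fin N × Fin M, g p ∈ T := by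
    intro p
    by_cases h : f p = {p}
    · simp only [hg, if_pos h, hT, Finset.mem_disjSum]
      left
      exact ⟨⟨p.1, f p⟩, by simpa using hf1 p, rfl⟩
    · simp only [hg, if_neg h, hT, Finset.mem_disjSum]
      right
      refine ⟨⟨p.2, f p⟩, ?_, rfl⟩
      simp only [Finset.mem_sigma, Finset.mem_univ, true_and, Set.Finite.mem_toFinset]
      refine ⟨hS𝒩 _ _ (hf1 p), ⟨p, hf2 p, rfl⟩, ?_⟩
      intro hsub
      apply h
      apply Set.Subset.antisymm
      · intro q hq
        have h1 : q.1 = p.1 := hSrow _ _ (hf1 p) hq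
        have h2 : q.2 = p.2 := hsub hq
        simp [Prod.ext_iff, h1, h2]
      · simpa using hf2 p
  have hinj : Set.InjOn g (Finset.univ : Finset (Fin N × Fin M)) := by
    intro p _ p' _ hpp'
    by_cases h : f p = {p} <;> by_cases h' : f p' = {p'} <;>
      simp only [hg, h, h', if_true, if_false, eq_self_iff_true, if_pos, if_neg,
        not_false_iff] at hpp'
    · have h2 := congrArg (Sum.elim (fun s : Σ _ : Fin N, Set (Fin N × Fin M) => s.2)
        (fun s : Σ _ : Fin M, Set (Fin N × Fin M) => s.2)) hpp'
      simpa using h2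
    · exact absurd hpp' (by simp)
    · exact absurd hpp' (by simp)
    · have h2 : f p = f p' := by
        have := congrArg (Sum.elim (fun s : Σ _ : Fin N, Set (Fin N × Fin M) => s.2)
          (fun s : Σ _ : Fin M, Set (Fin N × Fin M) => s.2)) hpp'
        simpa using this
      have hy : p.2 = p'.2 := by
        have := congrArg (Sum.elim (fun _ : Σ _ : Fin N, Set (Fin N × Fin M) => p.2)
          (fun s : Σ _ : Fin M, Set (Fin N × Fin M) => s.1)) hpp'
        simpa using this
      have h1 : p.1 = p'.1 := by
        have hm := hf2 p
        rw [h2] at hm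
        exact hSrow _ _ (hf1 p') hm
      exact Prod.ext h1 hy
  have hcard : (Finset.univ : Finset (Fin N × Fin M)).card ≤ T.card :=
    Finset.card_le_card_of_injOn g (fun p _ => hmaps p) (by simpa using hinj)
  have hTcard : T.card = (∑ x : Fin N, (S x).card) + ∑ y : Fin M, (C y).ncard := by
    rw [hT, Finset.card_disjSum, Finset.card_sigma, Finset.card_sigma]
    congr 1
    refine Finset.sum_congr rfl fun y _ => ?_
    exact (Set.ncard_eq_toFinset_card _ (hCfin y)).symm
  calc N * M = (Finset.univ : Finset (Fin N × Fin M)).card := by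
        simp [Finset.card_univ]
    _ ≤ T.card := hcard
    _ = _ := hTcard


/-- Lower bound for updates with an arbitrary set of 2D nodes: let `𝒩` be a
collection of nonempty subsets of the grid `E = {0,…,N−1} × {0,…,M−1}`
(`N, M ≥ 1`), and for each `x` let `S x ⊆ 𝒩` be a finite set of subsets of the
row `{x} × {0,…,M−1}` whose union is that row. With
`C y = {m ∈ 𝒩 | m` meets the column `{0,…,N−1} × {y}` but is not contained in
it`}`, one has `Σₓ |S x| + Σ_y |C y| ≥ N·M`; consequently some `x` satisfies
`(N+M)·|S x| ≥ N·M` or some `y` satisfies `(N+M)·|C y| ≥ N·M`. -/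
theorem arbitrary_nodes_update_lower_bound (N M : ℕ) (hN : 1 ≤ N) (hM : 1 ≤ M)
    (𝒩 : Set (Set (Fin N × Fin M))) (h𝒩 : ∀ m ∈ 𝒩, m.Nonempty)
    (S : Fin N → Finset (Set (Fin N × Fin M)))
    (hS𝒩 : ∀ x, ∀ m ∈ S x, m ∈ 𝒩)
    (hSrow : ∀ x, ∀ m ∈ S x, m ⊆ {p | p.1 = x})
    (hSunion : ∀ x, ⋃ m ∈ S x, m = {p : Fin N × Fin M | p.1 = x}) :
    N * M ≤ (∑ x : Fin N, (S x).card) +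
        ∑ y : Fin M, {m | m ∈ 𝒩 ∧ (m ∩ {p | p.2 = y}).Nonempty ∧
          ¬ m ⊆ {p | p.2 = y}}.ncard ∧
      ((∃ x : Fin N, N * M ≤ (N + M) * (S x).card) ∨
       (∃ y : Fin M, N * M ≤ (N + M) *
          {m | m ∈ 𝒩 ∧ (m ∩ {p | p.2 = y}).Nonempty ∧
            ¬ m ⊆ {p | p.2 = y}}.ncard)) := by
  have key := key_lemma N M hN hM 𝒩 h𝒩 S hS𝒩 hSrow hSunion
  refine ⟨key, ?_⟩
  by_contra hcon
  push_neg at hcon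
  obtain ⟨h1, h2⟩ := hcon
  set C : Fin M → Set (Set (Fin N × Fin M)) := fun y =>
    {m | m ∈ 𝒩 ∧ (m ∩ {p | p.2 = y}).Nonempty ∧ ¬ m ⊆ {p | p.2 = y}} with hC
  have e1 : ∀ x, (N + M) * (S x).card ≤ N * M - 1 := fun x => Nat.le_pred_of_lt (h1 x)
  have e2 : ∀ y, (N + M) * (C y).ncard ≤ N * M - 1 := fun y => Nat.le_pred_of_lt (h2 y)
  have hA : (N + M) * (∑ x : Fin N, (S x).card) ≤ N * (N * M - 1) := by
    rw [Finset.mul_sum]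
    calc ∑ x : Fin N, (N + M) * (S x).card ≤ ∑ _x : Fin N, (N * M - 1) :=
          Finset.sum_le_sum fun x _ => e1 x
      _ = N * (N * M - 1) := by simp [Finset.sum_const, mul_comm]
  have hB : (N + M) * (∑ y : Fin M, (C y).ncard) ≤ M * (N * M - 1) := by
    rw [Finset.mul_sum]
    calc ∑ y : Fin M, (N + M) * (C y).ncard ≤ ∑ _y : Fin M, (N * M - 1) :=
          Finset.sum_le_sum fun y _ => e2 y
      _ = M * (N * M - 1) := by simp [Finset.sum_const, mul_comm]
  have hmul : (N + M) * (N * M) ≤ (N + M) * ((∑ x : Fin N, (S x).card) +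
      ∑ y : Fin M, (C y).ncard) := Nat.mul_le_mul_left _ key
  have : (N + M) * (N * M) ≤ (N + M) * (N * M - 1) := by
    calc (N + M) * (N * M) ≤ (N + M) * ((∑ x : Fin N, (S x).card) +
          ∑ y : Fin M, (C y).ncard) := hmul
      _ = (N + M) * (∑ x : Fin N, (S x).card) +
          (N + M) * (∑ y : Fin M, (C y).ncard) := by ring
      _ ≤ N * (N * M - 1) + M * (N * M - 1) := Nat.add_le_add hA hB
      _ = (N + M) * (N * M - 1) := by ring
  have hpos : 0 < N + M := by omega
  have := Nat.le_of_mul_le_mul_left this hpos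
  have hNM : 1 ≤ N * M := Nat.one_le_iff_ne_zero.mpr (by positivity)
  omega
end
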